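/- arXiv:2411.08805 — 4 statements merged into one kernel-verified Lean document; each statement's English description precedes it below -/
import Mathlib

section
/- Let (X, Y, Z) be three random variables ε-close to being independent, with X ∈ [0, M_X], Y ∈ [0, M_Y], and Z ∈ {0, 1}, and suppose Pr[Z = 0] > 0. Then Cov(X, Y | Z = 0) ≤ (3ε / Pr[Z = 0]) · M_X · M_Y. -/
open Finset
open scoped Classical

/-- Let `(X, Y, Z)` be three random variables on a finite probability
space that are ε-close to being independent (so that for every bounded test function
`f : ℝ³ → [0, M]`, the expectations of `f` under the joint distribution and the product
of the marginals differ by at most `M·ε`), with `X ∈ [0, M_X]`, `Y ∈ [0, M_Y]`,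
`Z ∈ {0, 1}` and `Pr[Z = 0] > 0`.  Then
`Cov(X, Y | Z = 0) ≤ (3ε / Pr[Z = 0]) · M_X · M_Y`. -/
theorem stmt_3 {Ω : Type*} [Fintype Ω]
    (w : Ω → ℝ) (hw0 : ∀ ω, 0 ≤ w ω) (hw1 : ∑ ω, w ω = 1)
    (X Y Z : Ω → ℝ) (MX MY ε : ℝ)
    (hX : ∀ ω, X ω ∈ Set.Icc (0 : ℝ) MX) (hY : ∀ ω, Y ω ∈ Set.Icc (0 : ℝ) MY)
    (hZ : ∀ ω, Z ω = 0 ∨ Z ω = 1)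
    (hPr : 0 < ∑ ω ∈ univ.filter (fun ω => Z ω = 0), w ω)
    (hclose : ∀ (M : ℝ) (f : ℝ × ℝ × ℝ → ℝ), (∀ p, f p ∈ Set.Icc (0 : ℝ) M) →
      |(∑ ω, w ω * f (X ω, Y ω, Z ω)) -
        ∑ ω₁, ∑ ω₂, ∑ ω₃, w ω₁ * w ω₂ * w ω₃ * f (X ω₁, Y ω₂, Z ω₃)| ≤ M * ε) :
    (∑ ω ∈ univ.filter (fun ω => Z ω = 0), w ω * (X ω * Y ω)) /
        (∑ ω ∈ univ.filter (fun ω => Z ω = 0), w ω)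
      - ((∑ ω ∈ univ.filter (fun ω => Z ω = 0), w ω * X ω) /
          (∑ ω ∈ univ.filter (fun ω => Z ω = 0), w ω))
        * ((∑ ω ∈ univ.filter (fun ω => Z ω = 0), w ω * Y ω) /
          (∑ ω ∈ univ.filter (fun ω => Z ω = 0), w ω))
      ≤ (3 * ε / (∑ ω ∈ univ.filter (fun ω => Z ω = 0), w ω)) * MX * MY := by
  classical
  set S := univ.filter (fun ω => Z ω = 0) with hS
  set p := ∑ ω ∈ S, w ω with hp
  set A := ∑ ω ∈ S, w ω * (X ω * Y ω) with hA
  set B := ∑ ω ∈ S, w ω * X ω with hB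
  set C := ∑ ω ∈ S, w ω * Y ω with hC
  set eX := ∑ ω, w ω * X ω with heX
  set eY := ∑ ω, w ω * Y ω with heY
  have hSne : S.Nonempty := by
    rcases Finset.eq_empty_or_nonempty S with h | h
    · rw [hp, h, Finset.sum_empty] at hPr; exact absurd hPr (lt_irrefl 0)
    · exact h
  obtain ⟨ω₀, -⟩ := hSne
  have hMX : 0 ≤ MX := le_trans (hX ω₀).1 (hX ω₀).2
  have hMY : 0 ≤ MY := le_trans (hY ω₀).1 (hY ω₀).2
  have hε : 0 ≤ ε := by
    have h := hclose 1 (fun _ => 1) (by intro q; constructor <;> norm_num)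
    simp only [mul_one, ← Finset.mul_sum, hw1] at h
    simpa using h
  -- key triple sum identity
  have key : ∀ g h k : Ω → ℝ,
      (∑ ω₁, ∑ ω₂, ∑ ω₃, w ω₁ * w ω₂ * w ω₃ * (g ω₁ * h ω₂ * k ω₃))
        = (∑ ω, w ω * g ω) * (∑ ω, w ω * h ω) * (∑ ω, w ω * k ω) := by
    intro g h k
    have hk3 : ∀ c : ℝ, ∑ ω₃, c * (w ω₃ * k ω₃) = c * ∑ ω, w ω * k ω := fun c =>
      (Finset.mul_sum _ _ _).symm
    have hk2 : ∀ c : ℝ, ∑ ω₂, c * (w ω₂ * h ω₂) = c * ∑ ω, w ω * h ω := fun c =>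
      (Finset.mul_sum _ _ _).symm
    have hk1 : ∀ c : ℝ, ∑ ω₁, c * (w ω₁ * g ω₁) = c * ∑ ω, w ω * g ω := fun c =>
      (Finset.mul_sum _ _ _).symm
    calc (∑ ω₁, ∑ ω₂, ∑ ω₃, w ω₁ * w ω₂ * w ω₃ * (g ω₁ * h ω₂ * k ω₃))
        = ∑ ω₁, ∑ ω₂, (w ω₁ * g ω₁ * (w ω₂ * h ω₂)) * ∑ ω, w ω * k ω := by
          refine Finset.sum_congr rfl fun ω₁ _ => Finset.sum_congr rfl fun ω₂ _ => ?_
          refine Eq.trans ?_ (hk3 (w ω₁ * g ω₁ * (w ω₂ * h ω₂)))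
          exact Finset.sum_congr rfl fun ω₃ _ => by ring
      _ = ∑ ω₁, (w ω₁ * g ω₁ * ∑ ω, w ω * k ω) * ∑ ω, w ω * h ω := by
          refine Finset.sum_congr rfl fun ω₁ _ => ?_
          refine Eq.trans ?_ (hk2 (w ω₁ * g ω₁ * ∑ ω, w ω * k ω))
          exact Finset.sum_congr rfl fun ω₂ _ => by ring
      _ = ((∑ ω, w ω * k ω) * ∑ ω, w ω * h ω) * ∑ ω, w ω * g ω := by
          refine Eq.trans ?_ (hk1 ((∑ ω, w ω * k ω) * ∑ ω, w ω * h ω))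
          exact Finset.sum_congr rfl fun ω₁ _ => by ring
      _ = (∑ ω, w ω * g ω) * (∑ ω, w ω * h ω) * (∑ ω, w ω * k ω) := by ring
  have hwind : (∑ ω, w ω * (if Z ω = 0 then (1:ℝ) else 0)) = p := by
    rw [hp, hS, Finset.sum_filter]
    refine Finset.sum_congr rfl fun ω _ => ?_
    by_cases hz : Z ω = 0 <;> simp [hz]
  have cXeq : ∀ ω, max 0 (min (X ω) MX) = X ω := fun ω => by
    rw [min_eq_left (hX ω).2, max_eq_right (hX ω).1]
  have cYeq : ∀ ω, max 0 (min (Y ω) MY) = Y ω := fun ω => by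
    rw [min_eq_left (hY ω).2, max_eq_right (hY ω).1]
  have clX : ∀ x : ℝ, max 0 (min x MX) ∈ Set.Icc (0:ℝ) MX := fun x =>
    ⟨le_max_left 0 _, max_le hMX (min_le_right _ _)⟩
  have clY : ∀ x : ℝ, max 0 (min x MY) ∈ Set.Icc (0:ℝ) MY := fun x =>
    ⟨le_max_left 0 _, max_le hMY (min_le_right _ _)⟩
  have indmem : ∀ z : ℝ, (if z = 0 then (1:ℝ) else 0) ∈ Set.Icc (0:ℝ) 1 := fun z => by
    by_cases hz : z = 0 <;> simp [hz]
  -- first test function : x * y * 1_{z=0}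
  have hf1 := hclose (MX * MY)
      (fun q => max 0 (min q.1 MX) * max 0 (min q.2.1 MY) * (if q.2.2 = 0 then 1 else 0))
      (by
        intro q
        constructor
        · exact mul_nonneg (mul_nonneg (clX q.1).1 (clY q.2.1).1) (indmem q.2.2).1
        · calc max 0 (min q.1 MX) * max 0 (min q.2.1 MY) * (if q.2.2 = 0 then (1:ℝ) else 0)
              ≤ MX * MY * 1 := by
                apply mul_le_mul (mul_le_mul (clX q.1).2 (clY q.2.1).2 (clY q.2.1).1 hMX)
                  (indmem q.2.2).2 (indmem q.2.2).1 (mul_nonneg hMX hMY)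
            _ = MX * MY := mul_one _)
  have e1joint : (∑ ω, w ω * (max 0 (min (X ω) MX) * max 0 (min (Y ω) MY) *
      (if Z ω = 0 then (1:ℝ) else 0))) = A := by
    rw [hA, hS, Finset.sum_filter]
    refine Finset.sum_congr rfl fun ω _ => ?_
    rw [cXeq ω, cYeq ω]
    by_cases hz : Z ω = 0 <;> simp [hz, mul_assoc]
  have e1prod : (∑ ω₁, ∑ ω₂, ∑ ω₃, w ω₁ * w ω₂ * w ω₃ *
      (max 0 (min (X ω₁) MX) * max 0 (min (Y ω₂) MY) * (if Z ω₃ = 0 then (1:ℝ) else 0)))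
      = eX * eY * p := by
    have := key X Y (fun ω => if Z ω = 0 then (1:ℝ) else 0)
    simp only [cXeq, cYeq]
    rw [this, hwind]
  rw [e1joint, e1prod] at hf1
  have hA1 : A ≤ eX * eY * p + MX * MY * ε := by
    have := (abs_le.mp hf1).2; linarith
  -- second test function : x * 1_{z=0}
  have hf2 := hclose MX
      (fun q => max 0 (min q.1 MX) * (if q.2.2 = 0 then 1 else 0))
      (by
        intro q
        constructor
        · exact mul_nonneg (clX q.1).1 (indmem q.2.2).1
        · calc max 0 (min q.1 MX) * (if q.2.2 = 0 then (1:ℝ) else 0)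
              ≤ MX * 1 := mul_le_mul (clX q.1).2 (indmem q.2.2).2 (indmem q.2.2).1 hMX
            _ = MX := mul_one _)
  have e2joint : (∑ ω, w ω * (max 0 (min (X ω) MX) * (if Z ω = 0 then (1:ℝ) else 0))) = B := by
    rw [hB, hS, Finset.sum_filter]
    refine Finset.sum_congr rfl fun ω _ => ?_
    rw [cXeq ω]
    by_cases hz : Z ω = 0 <;> simp [hz]
  have e2prod : (∑ ω₁, ∑ ω₂, ∑ ω₃, w ω₁ * w ω₂ * w ω₃ *
      (max 0 (min (X ω₁) MX) * (if Z ω₃ = 0 then (1:ℝ) else 0))) = eX * p := by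
    have hk := key X (fun _ => 1) (fun ω => if Z ω = 0 then (1:ℝ) else 0)
    simp only [cXeq]
    calc (∑ ω₁, ∑ ω₂, ∑ ω₃, w ω₁ * w ω₂ * w ω₃ *
          (X ω₁ * (if Z ω₃ = 0 then (1:ℝ) else 0)))
        = ∑ ω₁, ∑ ω₂, ∑ ω₃, w ω₁ * w ω₂ * w ω₃ * (X ω₁ * 1 * (if Z ω₃ = 0 then (1:ℝ) else 0)) := by
          refine Finset.sum_congr rfl fun ω₁ _ => ?_
          refine Finset.sum_congr rfl fun ω₂ _ => ?_
          refine Finset.sum_congr rfl fun ω₃ _ => ?_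
          ring
      _ = eX * (∑ ω, w ω * 1) * (∑ ω, w ω * (if Z ω = 0 then (1:ℝ) else 0)) := hk
      _ = eX * p := by simp only [mul_one, hw1, hwind]
  rw [e2joint, e2prod] at hf2
  have hB1 : eX * p - MX * ε ≤ B := by
    have := (abs_le.mp hf2).1; linarith
  -- third test function : y * 1_{z=0}
  have hf3 := hclose MY
      (fun q => max 0 (min q.2.1 MY) * (if q.2.2 = 0 then 1 else 0))
      (by
        intro q
        constructor
        · exact mul_nonneg (clY q.2.1).1 (indmem q.2.2).1
        · calc max 0 (min q.2.1 MY) * (if q.2.2 = 0 then (1:ℝ) else 0)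
              ≤ MY * 1 := mul_le_mul (clY q.2.1).2 (indmem q.2.2).2 (indmem q.2.2).1 hMY
            _ = MY := mul_one _)
  have e3joint : (∑ ω, w ω * (max 0 (min (Y ω) MY) * (if Z ω = 0 then (1:ℝ) else 0))) = C := by
    rw [hC, hS, Finset.sum_filter]
    refine Finset.sum_congr rfl fun ω _ => ?_
    rw [cYeq ω]
    by_cases hz : Z ω = 0 <;> simp [hz]
  have e3prod : (∑ ω₁, ∑ ω₂, ∑ ω₃, w ω₁ * w ω₂ * w ω₃ *
      (max 0 (min (Y ω₂) MY) * (if Z ω₃ = 0 then (1:ℝ) else 0))) = eY * p := by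
    have hk := key (fun _ => 1) Y (fun ω => if Z ω = 0 then (1:ℝ) else 0)
    simp only [cYeq]
    calc (∑ ω₁, ∑ ω₂, ∑ ω₃, w ω₁ * w ω₂ * w ω₃ *
          (Y ω₂ * (if Z ω₃ = 0 then (1:ℝ) else 0)))
        = ∑ ω₁, ∑ ω₂, ∑ ω₃, w ω₁ * w ω₂ * w ω₃ * (1 * Y ω₂ * (if Z ω₃ = 0 then (1:ℝ) else 0)) := by
          refine Finset.sum_congr rfl fun ω₁ _ => ?_
          refine Finset.sum_congr rfl fun ω₂ _ => ?_
          refine Finset.sum_congr rfl fun ω₃ _ => ?_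
          ring
      _ = (∑ ω, w ω * 1) * eY * (∑ ω, w ω * (if Z ω = 0 then (1:ℝ) else 0)) := hk
      _ = eY * p := by simp only [mul_one, one_mul, hw1, hwind]
  rw [e3joint, e3prod] at hf3
  have hC1 : eY * p - MY * ε ≤ C := by
    have := (abs_le.mp hf3).1; linarith
  -- elementary bounds
  have heX_nn : 0 ≤ eX := Finset.sum_nonneg fun ω _ => mul_nonneg (hw0 ω) (hX ω).1
  have heX_le : eX ≤ MX := by
    have h1 : eX ≤ ∑ ω, w ω * MX :=
      Finset.sum_le_sum fun ω _ => mul_le_mul_of_nonneg_left (hX ω).2 (hw0 ω)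
    rwa [← Finset.sum_mul, hw1, one_mul] at h1
  have hC_nn : 0 ≤ C := Finset.sum_nonneg fun ω _ => mul_nonneg (hw0 ω) (hY ω).1
  have hC_le : C ≤ MY * p := by
    have h1 : C ≤ ∑ ω ∈ S, w ω * MY :=
      Finset.sum_le_sum fun ω _ => mul_le_mul_of_nonneg_left (hY ω).2 (hw0 ω)
    rw [← Finset.sum_mul] at h1
    linarith [h1]
  have hp0 : p ≠ 0 := ne_of_gt hPr
  have main : A * p - B * C ≤ 3 * ε * MX * MY * p := by
    nlinarith [mul_nonneg (sub_nonneg.mpr hB1) hC_nn,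
      mul_nonneg (mul_nonneg heX_nn hPr.le) (sub_nonneg.mpr hC1),
      mul_nonneg (mul_nonneg hMX hε) (sub_nonneg.mpr hC_le),
      mul_nonneg (mul_nonneg (mul_nonneg (sub_nonneg.mpr heX_le) hMY) hε) hPr.le,
      mul_le_mul_of_nonneg_right hA1 hPr.le]
  have hp2 : 0 < p * p := mul_pos hPr hPr
  calc A / p - B / p * (C / p) = (A * p - B * C) / (p * p) := by field_simp
    _ ≤ (3 * ε * MX * MY * p) / (p * p) := by gcongr
    _ = 3 * ε / p * MX * MY := by field_simp
end

section
/- Let f be a fractional matching on a graph G (i.e., f : E → [0,1] with Σ_{e ∋ v} f_e ≤ 1 for every vertex v) that satisfies the blossom inequalities for all vertex sets S with |S| ≤ 1/ε, meaning Σ_{(u,v)∈E, u,v∈S} f_{(u,v)} ≤ ⌊|S|/2⌋. Then the maximum matching size of G satisfies μ(G) ≥ (1 − ε)·|f|, where |f| = Σ_e f_e. -/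
/-!
By the Tutte–Berge formula, in the form of Edmonds' odd set covers, there are a vertex set `U` and
a family `P` of vertex sets such that every edge meets `U` or lies inside a member of `P`, and
`|U| + Σ_{S ∈ P} ⌊|S|/2⌋ ≤ μ(G)`. The total value of `f` on edges meeting `U` is at most `|U|`.
On the edges inside `S ∈ P` it is at most `⌊|S|/2⌋` by the blossom inequality when `|S| ≤ 1/ε`,
and at most `|S|/2` otherwise; in the latter case `ε|S| > 1`, so `(1 - ε)|S|/2 ≤ (|S| - 1)/2`.

The cover is built by induction on `μ(G)`. A vertex covered by every maximum matching goes into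
`U`, and deleting its edges lowers `μ`. If there is no such vertex, Gallai's lemma says that a
maximum matching misses at most one vertex of each connected component, and `P` is taken to be
the components.
-/

open Finset
open scoped Classical

theorem Finset.sum_sum_filter_eq_sum_card_filter_mul {α β : Type*} (s : Finset α) (t : Finset β)
    (r : α → β → Prop) [∀ a b, Decidable (r a b)] (f : β → ℝ) :
    ∑ a ∈ s, ∑ b ∈ t with r a b, f b = ∑ b ∈ t, #{a ∈ s | r a b} * f b := by
  simpa [bipartiteAbove, bipartiteBelow] using
    sum_sum_bipartiteAbove_eq_sum_sum_bipartiteBelow r (s := s) (t := t) (fun _ b => f b)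

lemma one_sub_mul_le_div_two {ε x : ℝ} {n : ℕ} (hε : 0 < ε) (hx0 : 0 ≤ x) (hx : x ≤ n / 2)
    (hsmall : (n : ℝ) ≤ 1 / ε → x ≤ (n / 2 : ℕ)) : (1 - ε) * x ≤ (n / 2 : ℕ) := by
  by_cases h : (n : ℝ) ≤ 1 / ε
  · nlinarith [hsmall h]
  have hεn : 1 < ε * n := by
    rw [not_le, div_lt_iff₀ hε] at h
    linarith
  have hfloor : ((n : ℝ) - 1) / 2 ≤ (n / 2 : ℕ) := by
    have : (n : ℝ) ≤ 2 * (n / 2 : ℕ) + 1 := by exact_mod_cast (by omega : n ≤ 2 * (n / 2) + 1)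
    linarith
  rcases le_or_gt ε 1 with hε1 | hε1
  · calc (1 - ε) * x ≤ (1 - ε) * (n / 2) := mul_le_mul_of_nonneg_left hx (by linarith)
      _ ≤ ((n : ℝ) - 1) / 2 := by linarith
      _ ≤ (n / 2 : ℕ) := hfloor
  · exact (mul_nonpos_of_nonpos_of_nonneg (by linarith) hx0).trans (Nat.cast_nonneg _)

namespace SimpleGraph

variable {V : Type*}

lemma mem_edgeSet_deleteIncidenceSet {G : SimpleGraph V} {v : V} {e : Sym2 V} :
    e ∈ (G.deleteIncidenceSet v).edgeSet ↔ e ∈ G.edgeSet ∧ v ∉ e := by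
  simp [edgeSet_deleteIncidenceSet, incidenceSet]

variable [DecidableEq V] {M N : Finset (Sym2 V)} {a b : V}

def matchedVerts (M : Finset (Sym2 V)) : Finset V := M.biUnion Sym2.toFinset

@[simp]
lemma mem_matchedVerts {v : V} : v ∈ matchedVerts M ↔ ∃ e ∈ M, v ∈ e := by
  simp [matchedVerts]

lemma matchedVerts_mono (h : M ⊆ N) : matchedVerts M ⊆ matchedVerts N :=
  biUnion_subset_biUnion_of_subset_left _ h

lemma matchedVerts_union (M N : Finset (Sym2 V)) :
    matchedVerts (M ∪ N) = matchedVerts M ∪ matchedVerts N :=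
  union_biUnion

lemma matchedVerts_insert (M : Finset (Sym2 V)) (a b : V) :
    matchedVerts (insert s(a, b) M) = insert a (insert b (matchedVerts M)) := by
  ext; simp [or_assoc]

lemma left_mem_matchedVerts (h : s(a, b) ∈ M) : a ∈ matchedVerts M :=
  mem_matchedVerts.mpr ⟨_, h, Sym2.mem_mk_left a b⟩

lemma right_mem_matchedVerts (h : s(a, b) ∈ M) : b ∈ matchedVerts M :=
  mem_matchedVerts.mpr ⟨_, h, Sym2.mem_mk_right a b⟩

lemma mk_notMem_of_left_notMem_matchedVerts (h : a ∉ matchedVerts M) : s(a, b) ∉ M :=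
  fun h' => h (left_mem_matchedVerts h')

variable {G : SimpleGraph V}

variable (G) in
def IsEdgeMatching (M : Finset (Sym2 V)) : Prop :=
  ↑M ⊆ G.edgeSet ∧ ∀ v : V, #{e ∈ M | v ∈ e} ≤ 1

namespace IsEdgeMatching

lemma mono (hN : G.IsEdgeMatching N) (h : M ⊆ N) : G.IsEdgeMatching M :=
  ⟨(coe_subset.mpr h).trans hN.1, fun v => (card_le_card (filter_subset_filter _ h)).trans (hN.2 v)⟩

lemma adj (hM : G.IsEdgeMatching M) (h : s(a, b) ∈ M) : G.Adj a b :=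
  hM.1 h

lemma eq_of_mem (hM : G.IsEdgeMatching M) {e e' : Sym2 V} {v : V} (he : e ∈ M) (he' : e' ∈ M)
    (hv : v ∈ e) (hv' : v ∈ e') : e = e' :=
  card_le_one.mp (hM.2 v) _ (mem_filter.mpr ⟨he, hv⟩) _ (mem_filter.mpr ⟨he', hv'⟩)

lemma insert (hM : G.IsEdgeMatching M) (hab : G.Adj a b) (ha : a ∉ matchedVerts M)
    (hb : b ∉ matchedVerts M) : G.IsEdgeMatching (insert s(a, b) M) := by
  refine ⟨by simpa using Set.insert_subset (show s(a, b) ∈ G.edgeSet from hab) hM.1, fun v => ?_⟩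
  rw [filter_insert]
  split_ifs with hv
  · have : {e ∈ M | v ∈ e} = ∅ := by
      refine filter_eq_empty_iff.mpr fun e he hve => ?_
      rcases Sym2.mem_iff.mp hv with rfl | rfl
      exacts [ha (mem_matchedVerts.mpr ⟨e, he, hve⟩), hb (mem_matchedVerts.mpr ⟨e, he, hve⟩)]
    simp [this]
  · exact hM.2 v

lemma matchedVerts_erase (hM : G.IsEdgeMatching M) (hab : s(a, b) ∈ M) :
    matchedVerts (M.erase s(a, b)) = ((matchedVerts M).erase a).erase b := by
  ext v
  simp only [mem_matchedVerts, mem_erase]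
  constructor
  · rintro ⟨e, ⟨hne, he⟩, hv⟩
    refine ⟨?_, ?_, e, he, hv⟩ <;> rintro rfl <;> exact hne (hM.eq_of_mem he hab hv (by simp))
  · rintro ⟨hvb, hva, e, he, hv⟩
    refine ⟨e, ⟨?_, he⟩, hv⟩
    rintro rfl
    rcases Sym2.mem_iff.mp hv with rfl | rfl <;> simp_all

lemma card_matchedVerts (hM : G.IsEdgeMatching M) : #(matchedVerts M) = 2 * #M := by
  rw [matchedVerts, card_biUnion, mul_comm, ← smul_eq_mul, ← sum_const]
  · exact sum_congr rfl fun e he =>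
      Sym2.card_toFinset_of_not_isDiag e (G.not_isDiag_of_mem_edgeSet (hM.1 he))
  · intro e he e' he' hne
    rw [Function.onFun, Finset.disjoint_left]
    exact fun v hv hv' =>
      hne (hM.eq_of_mem he he' (Sym2.mem_toFinset.mp hv) (Sym2.mem_toFinset.mp hv'))

end IsEdgeMatching

variable (G) in
/-- `M₁` and `N₁` arise from `M` and `N` by switching along an alternating path from `u` to `x`
that starts with an edge of `N`. -/
structure IsSwitch (M N : Finset (Sym2 V)) (u x : V) (M₁ N₁ : Finset (Sym2 V)) : Prop where
  isEdgeMatching_left : G.IsEdgeMatching M₁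
  isEdgeMatching_right : G.IsEdgeMatching N₁
  card_left : #M₁ = #M
  card_right : #N₁ = #N
  mem_matchedVerts : x ∈ matchedVerts M
  matchedVerts_left : matchedVerts M₁ = (insert u (matchedVerts M)).erase x
  matchedVerts_right : matchedVerts N₁ = insert x ((matchedVerts N).erase u)
  card_inter_lt : #(M ∩ N) < #(M ∩ N₁)

section AlternatingStep

variable {u v₁ v₂ : V}

lemma isSwitch_insert_erase (hM : G.IsEdgeMatching M) (hN : G.IsEdgeMatching N)
    (huM : u ∉ matchedVerts M) (he₁ : s(u, v₁) ∈ N) (he₂ : s(v₁, v₂) ∈ M)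
    (hv₂N : v₂ ∉ matchedVerts N) :
    G.IsSwitch M N u v₂ (insert s(u, v₁) (M.erase s(v₁, v₂)))
      (insert s(v₁, v₂) (N.erase s(u, v₁))) := by
  have huv₁ := (hN.adj he₁).ne
  have hv₁v₂ := (hM.adj he₂).ne
  have hv₁M := left_mem_matchedVerts he₂
  have hv₂M := right_mem_matchedVerts he₂
  have hv₁N := right_mem_matchedVerts he₁
  have hM' := hM.matchedVerts_erase he₂
  have hN' := hN.matchedVerts_erase he₁
  have he₁M : s(u, v₁) ∉ M := mk_notMem_of_left_notMem_matchedVerts huM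
  have he₂N : s(v₁, v₂) ∉ N := fun h => hv₂N (right_mem_matchedVerts h)
  refine ⟨(hM.mono (erase_subset _ _)).insert (hN.adj he₁) ?_ ?_,
    (hN.mono (erase_subset _ _)).insert (hM.adj he₂) ?_ ?_, ?_, ?_, hv₂M, ?_, ?_, ?_⟩
  · rw [hM']; grind
  · rw [hM']; grind
  · rw [hN']; grind
  · rw [hN']; grind
  · rw [card_insert_of_notMem (by simp [he₁M]), card_erase_add_one he₂]
  · rw [card_insert_of_notMem (by simp [he₂N]), card_erase_add_one he₁]
  · rw [matchedVerts_insert, hM']; grind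
  · rw [matchedVerts_insert, hN']; grind
  · refine card_lt_card (ssubset_iff_of_subset ?_ |>.mpr ⟨s(v₁, v₂), ?_, ?_⟩) <;> grind

lemma IsSwitch.extend (hM : G.IsEdgeMatching M) (hN : G.IsEdgeMatching N)
    (huM : u ∉ matchedVerts M) (he₁ : s(u, v₁) ∈ N) (he₂ : s(v₁, v₂) ∈ M)
    (hv₂N : v₂ ∈ matchedVerts N) {x : V} {M₁ N₁ : Finset (Sym2 V)}
    (h : G.IsSwitch (M.erase s(v₁, v₂)) (N.erase s(u, v₁)) v₂ x M₁ N₁) :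
    G.IsSwitch M N u x (insert s(u, v₁) M₁) (insert s(v₁, v₂) N₁) := by
  have huv₁ := (hN.adj he₁).ne
  have hv₁v₂ := (hM.adj he₂).ne
  have hv₁M := left_mem_matchedVerts he₂
  have hv₂M := right_mem_matchedVerts he₂
  have hv₁N := right_mem_matchedVerts he₁
  have hM' := hM.matchedVerts_erase he₂
  have hN' := hN.matchedVerts_erase he₁
  have hxM := h.mem_matchedVerts
  have hM₁ := h.matchedVerts_left
  have hN₁ := h.matchedVerts_right
  rw [hM'] at hxM hM₁
  rw [hN'] at hN₁
  have he₁M : s(u, v₁) ∉ M := mk_notMem_of_left_notMem_matchedVerts huM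
  have he₂N : s(v₁, v₂) ∉ N := fun h' => by
    have := hN.eq_of_mem he₁ h' (Sym2.mem_mk_right u v₁) (Sym2.mem_mk_left v₁ v₂)
    grind
  refine ⟨h.isEdgeMatching_left.insert (hN.adj he₁) ?_ ?_,
    h.isEdgeMatching_right.insert (hM.adj he₂) ?_ ?_, ?_, ?_, ?_, ?_, ?_, ?_⟩
  · rw [hM₁]; grind
  · rw [hM₁]; grind
  · rw [hN₁]; grind
  · rw [hN₁]; grind
  · rw [card_insert_of_notMem (mk_notMem_of_left_notMem_matchedVerts (by rw [hM₁]; grind)),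
      h.card_left, card_erase_add_one he₂]
  · rw [card_insert_of_notMem (mk_notMem_of_left_notMem_matchedVerts (by rw [hN₁]; grind)),
      h.card_right, card_erase_add_one he₁]
  · grind
  · rw [matchedVerts_insert, hM₁]; grind
  · rw [matchedVerts_insert, hN₁]; grind
  · calc #(M ∩ N) ≤ #(M.erase s(v₁, v₂) ∩ N.erase s(u, v₁)) := card_le_card (by grind)
      _ < #(M.erase s(v₁, v₂) ∩ N₁) := h.card_inter_lt
      _ ≤ #(M ∩ insert s(v₁, v₂) N₁) := card_le_card (by grind)

end AlternatingStep

theorem exists_augmentation_or_isSwitch (hM : G.IsEdgeMatching M)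
    (hN : G.IsEdgeMatching N) {u : V} (huM : u ∉ matchedVerts M) (huN : u ∈ matchedVerts N) :
    (∃ P, G.IsEdgeMatching P ∧ P ⊆ M ∪ N ∧ #P = #M + 1) ∨
      ∃ x M₁ N₁, G.IsSwitch M N u x M₁ N₁ := by
  -- Follow the alternating path `u v₁ v₂ …` starting with an edge of `N`; past `v₂`, recurse
  -- on `M` and `N` with the first two edges of the path removed.
  induction hn : #N using Nat.strong_induction_on generalizing M N u with
  | _ n ih =>
  obtain ⟨_, he₁, hue₁⟩ := mem_matchedVerts.mp huN
  obtain ⟨v₁, rfl⟩ := Sym2.mem_iff_exists.mp hue₁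
  by_cases hv₁M : v₁ ∉ matchedVerts M
  · refine Or.inl ⟨_, hM.insert (hN.adj he₁) huM hv₁M,
      insert_subset (mem_union_right _ he₁) subset_union_left, ?_⟩
    exact card_insert_of_notMem (mk_notMem_of_left_notMem_matchedVerts huM)
  obtain ⟨_, he₂, hv₁e₂⟩ := mem_matchedVerts.mp (not_not.mp hv₁M)
  obtain ⟨v₂, rfl⟩ := Sym2.mem_iff_exists.mp hv₁e₂
  by_cases hv₂N : v₂ ∉ matchedVerts N
  · exact Or.inr ⟨_, _, _, isSwitch_insert_erase hM hN huM he₁ he₂ hv₂N⟩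
  have hM' := hM.matchedVerts_erase he₂
  have hN' := hN.matchedVerts_erase he₁
  have huv₁ := (hN.adj he₁).ne
  have hv₁v₂ := (hM.adj he₂).ne
  have huv₂ : u ≠ v₂ := fun h => huM (h ▸ right_mem_matchedVerts he₂)
  have hv₂M' : v₂ ∉ matchedVerts (M.erase s(v₁, v₂)) := by simp [hM']
  have hv₂N' : v₂ ∈ matchedVerts (N.erase s(u, v₁)) := by
    simp [hN', huv₂.symm, hv₁v₂.symm, not_not.mp hv₂N]
  have hlt : #(N.erase s(u, v₁)) < n := hn ▸ card_erase_lt_of_mem he₁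
  rcases ih _ hlt (hM.mono (erase_subset _ _)) (hN.mono (erase_subset _ _)) hv₂M' hv₂N' rfl with
    ⟨P, hP, hPMN, hcard⟩ | ⟨x, M₁, N₁, h⟩
  · have hcov := matchedVerts_mono hPMN
    rw [matchedVerts_union, hM', hN'] at hcov
    refine Or.inl ⟨_, hP.insert (hN.adj he₁) (by grind) (by grind), ?_, ?_⟩
    · exact insert_subset (mem_union_right _ he₁)
        (hPMN.trans (union_subset_union (erase_subset _ _) (erase_subset _ _)))
    · rw [card_insert_of_notMem (mk_notMem_of_left_notMem_matchedVerts (by grind)), hcard,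
        card_erase_add_one he₂]
  · exact Or.inr ⟨x, _, _, h.extend hM hN huM he₁ he₂ (not_not.mp hv₂N)⟩

section Maximum

variable [Fintype V]

variable (G) in
noncomputable def matchingNumber : ℕ :=
  ({M | G.IsEdgeMatching M} : Finset (Finset (Sym2 V))).sup card

lemma IsEdgeMatching.card_le_matchingNumber (hM : G.IsEdgeMatching M) : #M ≤ G.matchingNumber :=
  le_sup (f := card) (mem_filter.mpr ⟨mem_univ _, hM⟩)

variable (G) in
def IsMaximumMatching (M : Finset (Sym2 V)) : Prop := G.IsEdgeMatching M ∧ #M = G.matchingNumber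

variable (G) in
lemma exists_isMaximumMatching : ∃ M, G.IsMaximumMatching M := by
  have hempty : G.IsEdgeMatching ∅ := ⟨by simp, by simp⟩
  obtain ⟨M, hM, hcard⟩ := exists_mem_eq_sup _ ⟨∅, mem_filter.mpr ⟨mem_univ _, hempty⟩⟩ card
  exact ⟨M, (mem_filter.mp hM).2, hcard.symm⟩

lemma IsMaximumMatching.not_adj (hM : G.IsMaximumMatching M) (ha : a ∉ matchedVerts M)
    (hb : b ∉ matchedVerts M) : ¬G.Adj a b := fun hab => by
  have := (hM.1.insert hab ha hb).card_le_matchingNumber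
  rw [card_insert_of_notMem (mk_notMem_of_left_notMem_matchedVerts ha), hM.2] at this
  omega

theorem IsMaximumMatching.not_reachable
    (hall : ∀ v, ∃ N, G.IsMaximumMatching N ∧ v ∉ matchedVerts N)
    (hM : G.IsMaximumMatching M) {u v : V} (hu : u ∉ matchedVerts M) (hv : v ∉ matchedVerts M)
    (huv : u ≠ v) : ¬G.Reachable u v := by
  intro hr
  -- `w` follows `u` on a shortest path to `v`, and `N` is a maximum matching missing `w` that
  -- shares as many edges with `M` as possible.
  induction hd : G.dist u v using Nat.strong_induction_on generalizing M u v with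
  | _ d ih =>
  obtain ⟨p, hp⟩ := hr.exists_walk_length_eq_dist
  cases p with
  | nil => exact huv rfl
  | @cons _ w _ huw q =>
  have hwv : w ≠ v := fun h => hM.not_adj hu (h ▸ hv) huw
  have hq : q.length ≠ 0 := fun h => hwv (q.eq_of_length_eq_zero h)
  rw [Walk.length_cons] at hp
  have hdwv : G.dist w v < d := by
    have := dist_le q
    omega
  have hd : 1 < d := by omega
  obtain ⟨N, hNmem, hNmax⟩ := exists_max_image
    {N | G.IsMaximumMatching N ∧ w ∉ matchedVerts N} (fun N => #(M ∩ N))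
    (by obtain ⟨N, hN⟩ := hall w; exact ⟨N, mem_filter.mpr ⟨mem_univ _, hN⟩⟩)
  obtain ⟨hN, hwN⟩ := (mem_filter.mp hNmem).2
  have huN : u ∈ matchedVerts N := by
    by_contra h
    exact ih 1 hd hN h hwN huw.ne huw.reachable (dist_eq_one_iff_adj.mpr huw)
  rcases exists_augmentation_or_isSwitch hM.1 hN.1 hu huN with ⟨P, hP, -, hcard⟩ | ⟨x, M₁, N₁, h⟩
  · have := hP.card_le_matchingNumber
    have := hM.2
    omega
  have hM₁ : G.IsMaximumMatching M₁ := ⟨h.isEdgeMatching_left, h.card_left.trans hM.2⟩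
  have hN₁ : G.IsMaximumMatching N₁ := ⟨h.isEdgeMatching_right, h.card_right.trans hN.2⟩
  by_cases hxw : x = w
  · subst hxw
    refine ih _ hdwv hM₁ ?_ ?_ hwv ⟨q⟩ rfl <;> rw [h.matchedVerts_left] <;> grind
  · have := hNmax N₁ (mem_filter.mpr ⟨mem_univ _, hN₁, by rw [h.matchedVerts_right]; grind⟩)
    have := h.card_inter_lt
    omega

variable (G) in
noncomputable def reachableFinset (x : V) : Finset V := {w | G.Reachable x w}

@[simp]
lemma mem_reachableFinset {x w : V} : w ∈ G.reachableFinset x ↔ G.Reachable x w := by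
  simp [reachableFinset]

lemma IsMaximumMatching.card_reachableFinset_div_two_le
    (hall : ∀ v, ∃ N, G.IsMaximumMatching N ∧ v ∉ matchedVerts N)
    (hM : G.IsMaximumMatching M) (x : V) :
    #(G.reachableFinset x) / 2 ≤ #{e ∈ M | ∀ w ∈ e, w ∈ G.reachableFinset x} := by
  set S := G.reachableFinset x
  have hmatched : S ∩ matchedVerts M ⊆ matchedVerts {e ∈ M | ∀ w ∈ e, w ∈ S} := by
    intro a ha
    obtain ⟨haS, e, he, hae⟩ := by simpa [S] using ha
    obtain ⟨b, rfl⟩ := Sym2.mem_iff_exists.mp hae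
    have hb : G.Reachable x b := haS.trans (hM.1.adj he).reachable
    exact left_mem_matchedVerts (mem_filter.mpr ⟨he, by simp [S, haS, hb]⟩)
  have hunmatched : #(S \ matchedVerts M) ≤ 1 := by
    refine card_le_one.mpr fun a ha b hb => ?_
    simp only [S, mem_sdiff, mem_reachableFinset] at ha hb
    by_contra hab
    exact hM.not_reachable hall ha.2 hb.2 hab (ha.1.symm.trans hb.1)
  have := card_inter_add_card_sdiff S (matchedVerts M)
  have := card_le_card hmatched
  rw [(hM.1.mono (filter_subset _ _)).card_matchedVerts] at this
  omega

variable (G) in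
def CoversEdges (U : Finset V) (P : Finset (Finset V)) : Prop :=
  ∀ e ∈ G.edgeSet, (∃ w ∈ e, w ∈ U) ∨ ∃ S ∈ P, ∀ w ∈ e, w ∈ S

variable (G) in
lemma coversEdges_image_reachableFinset : G.CoversEdges ∅ (univ.image G.reachableFinset) := by
  intro e he
  induction e using Sym2.ind with | _ a b =>
  refine Or.inr ⟨_, mem_image_of_mem _ (mem_univ a), fun w hw => ?_⟩
  rcases Sym2.mem_iff.mp hw with rfl | rfl
  · simp
  · simpa using he.reachable

lemma sum_card_reachableFinset_div_two_le
    (hall : ∀ v, ∃ N, G.IsMaximumMatching N ∧ v ∉ matchedVerts N) :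
    ∑ S ∈ univ.image G.reachableFinset, #S / 2 ≤ G.matchingNumber := by
  obtain ⟨M, hM⟩ := G.exists_isMaximumMatching
  set P := univ.image G.reachableFinset
  have hdisj : (P : Set (Finset V)).PairwiseDisjoint fun S => {e ∈ M | ∀ w ∈ e, w ∈ S} := by
    intro S hS T hT hST
    obtain ⟨x, -, rfl⟩ := mem_image.mp hS
    obtain ⟨y, -, rfl⟩ := mem_image.mp hT
    refine Finset.disjoint_left.mpr fun e he he' => hST ?_
    induction e using Sym2.ind with | _ a b =>
    have hxa : G.Reachable x a := by simpa using (mem_filter.mp he).2 a (Sym2.mem_mk_left a b)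
    have hya : G.Reachable y a := by simpa using (mem_filter.mp he').2 a (Sym2.mem_mk_left a b)
    ext w
    simp only [mem_reachableFinset]
    exact ⟨fun h => hya.trans (hxa.symm.trans h), fun h => hxa.trans (hya.symm.trans h)⟩
  calc ∑ S ∈ P, #S / 2 ≤ ∑ S ∈ P, #{e ∈ M | ∀ w ∈ e, w ∈ S} := sum_le_sum fun S hS => by
        obtain ⟨x, -, rfl⟩ := mem_image.mp hS
        exact hM.card_reachableFinset_div_two_le hall x
    _ = #(P.biUnion fun S => {e ∈ M | ∀ w ∈ e, w ∈ S}) := (card_biUnion hdisj).symm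
    _ ≤ #M := card_le_card (biUnion_subset.mpr fun _ _ => filter_subset _ _)
    _ = G.matchingNumber := hM.2

lemma matchingNumber_deleteIncidenceSet_lt {v : V}
    (hv : ∀ M, G.IsMaximumMatching M → v ∈ matchedVerts M) :
    (G.deleteIncidenceSet v).matchingNumber < G.matchingNumber := by
  obtain ⟨M, hM⟩ := (G.deleteIncidenceSet v).exists_isMaximumMatching
  have hMG : G.IsEdgeMatching M :=
    ⟨hM.1.1.trans (edgeSet_mono (G.deleteIncidenceSet_le v)), hM.1.2⟩
  have hvM : v ∉ matchedVerts M := by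
    intro hv'
    obtain ⟨e, he, hve⟩ := mem_matchedVerts.mp hv'
    exact (mem_edgeSet_deleteIncidenceSet.mp (hM.1.1 he)).2 hve
  rw [← hM.2]
  exact lt_of_le_of_ne hMG.card_le_matchingNumber fun h => hvM (hv M ⟨hMG, h⟩)

variable (G) in
theorem exists_coversEdges_card_add_sum_le_matchingNumber :
    ∃ U P, G.CoversEdges U P ∧ #U + ∑ S ∈ P, #S / 2 ≤ G.matchingNumber := by
  induction hn : G.matchingNumber using Nat.strong_induction_on generalizing G with
  | _ n ih =>
  by_cases hall : ∀ v, ∃ N, G.IsMaximumMatching N ∧ v ∉ matchedVerts N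
  · exact ⟨∅, _, G.coversEdges_image_reachableFinset,
      by simpa [hn] using sum_card_reachableFinset_div_two_le hall⟩
  push Not at hall
  obtain ⟨v, hv⟩ := hall
  obtain ⟨U, P, hUP, hle⟩ :=
    ih _ (hn ▸ matchingNumber_deleteIncidenceSet_lt hv) (G.deleteIncidenceSet v) rfl
  refine ⟨insert v U, P, fun e he => ?_, ?_⟩
  · by_cases hve : v ∈ e
    · exact Or.inl ⟨v, hve, mem_insert_self v U⟩
    rcases hUP e (mem_edgeSet_deleteIncidenceSet.mpr ⟨he, hve⟩) with ⟨w, hwe, hwU⟩ | hP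
    · exact Or.inl ⟨w, hwe, mem_insert_of_mem hwU⟩
    · exact Or.inr hP
  · have := card_insert_le v U
    have := matchingNumber_deleteIncidenceSet_lt hv
    omega

end Maximum

section FractionalMatching

variable [Fintype V] {f : Sym2 V → ℝ}

lemma CoversEdges.sum_edgeFinset_le {U : Finset V} {P : Finset (Finset V)}
    (hUP : G.CoversEdges U P) (hf0 : ∀ e, 0 ≤ f e) :
    ∑ e ∈ G.edgeFinset, f e ≤ ∑ v ∈ U, ∑ e ∈ G.edgeFinset with v ∈ e, f e +
      ∑ S ∈ P, ∑ e ∈ G.edgeFinset with ∀ w ∈ e, w ∈ S, f e := by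
  rw [sum_sum_filter_eq_sum_card_filter_mul, sum_sum_filter_eq_sum_card_filter_mul,
    ← sum_add_distrib]
  refine sum_le_sum fun e he => ?_
  rw [← add_mul]
  refine le_mul_of_one_le_left (hf0 e) ?_
  have : 0 < #{v ∈ U | v ∈ e} + #{S ∈ P | ∀ w ∈ e, w ∈ S} := by
    rcases hUP e (mem_edgeFinset.mp he) with ⟨w, hwe, hwU⟩ | ⟨S, hS, heS⟩
    · exact Nat.add_pos_left (card_pos.mpr ⟨w, mem_filter.mpr ⟨hwU, hwe⟩⟩) _
    · exact Nat.add_pos_right _ (card_pos.mpr ⟨S, mem_filter.mpr ⟨hS, heS⟩⟩)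
  exact_mod_cast this

lemma sum_filter_subset_le_card_div_two (hf0 : ∀ e, 0 ≤ f e)
    (hfm : ∀ v, ∑ e ∈ G.edgeFinset with v ∈ e, f e ≤ 1) (S : Finset V) :
    ∑ e ∈ G.edgeFinset with ∀ w ∈ e, w ∈ S, f e ≤ #S / 2 := by
  set E := G.edgeFinset.filter fun e => ∀ w ∈ e, w ∈ S
  have hcard : ∀ e ∈ E, #{v ∈ S | v ∈ e} = 2 := fun e he => by
    obtain ⟨he, heS⟩ := mem_filter.mp he
    have : {v ∈ S | v ∈ e} = e.toFinset := by
      ext v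
      simpa using fun hv => heS v hv
    rw [this, Sym2.card_toFinset_of_not_isDiag _
      (G.not_isDiag_of_mem_edgeSet (mem_edgeFinset.mp he))]
  have : 2 * ∑ e ∈ E, f e ≤ #S :=
    calc 2 * ∑ e ∈ E, f e = ∑ e ∈ E, #{v ∈ S | v ∈ e} * f e := by
          rw [mul_sum]
          exact sum_congr rfl fun e he => by rw [hcard e he]; norm_num
      _ = ∑ v ∈ S, ∑ e ∈ E with v ∈ e, f e := (sum_sum_filter_eq_sum_card_filter_mul ..).symm
      _ ≤ ∑ v ∈ S, ∑ e ∈ G.edgeFinset with v ∈ e, f e := sum_le_sum fun v _ =>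
          sum_le_sum_of_subset_of_nonneg (filter_subset_filter _ (filter_subset _ _))
            fun e _ _ => hf0 e
      _ ≤ ∑ _v ∈ S, 1 := sum_le_sum fun v _ => hfm v
      _ = #S := by simp
  linarith

end FractionalMatching

end SimpleGraph

open SimpleGraph

theorem stmt_4_general {V : Type*} [Fintype V] [DecidableEq V]
    (G : SimpleGraph V) (f : Sym2 V → ℝ) (ε : ℝ) (hε : 0 < ε)
    (hf0 : ∀ e, 0 ≤ f e)
    (hfm : ∀ v : V, ∑ e ∈ G.edgeFinset.filter (fun e => v ∈ e), f e ≤ 1)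
    (hblossom : ∀ S : Finset V, (S.card : ℝ) ≤ 1/ε →
      ∑ e ∈ G.edgeFinset.filter (fun e => ∀ v ∈ e, v ∈ S), f e ≤ ((S.card / 2 : ℕ) : ℝ)) :
    ∃ M : Finset (Sym2 V), M ⊆ G.edgeFinset ∧
      (∀ v : V, (M.filter (fun e => v ∈ e)).card ≤ 1) ∧
      (1 - ε) * (∑ e ∈ G.edgeFinset, f e) ≤ (M.card : ℝ) := by
  obtain ⟨U, P, hUP, hbound⟩ := G.exists_coversEdges_card_add_sum_le_matchingNumber
  obtain ⟨M, ⟨hMG, hM⟩, hcard⟩ := G.exists_isMaximumMatching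
  refine ⟨M, fun e he => mem_edgeFinset.mpr (hMG he), hM, ?_⟩
  rcases le_or_gt 1 ε with hε1 | hε1
  · exact (mul_nonpos_of_nonpos_of_nonneg (by linarith) (sum_nonneg fun e _ => hf0 e)).trans
      (Nat.cast_nonneg _)
  have hstars : ∑ v ∈ U, ∑ e ∈ G.edgeFinset with v ∈ e, f e ≤ #U := by
    simpa using sum_le_sum fun v (_ : v ∈ U) => hfm v
  have hstars0 : 0 ≤ ∑ v ∈ U, ∑ e ∈ G.edgeFinset with v ∈ e, f e :=
    sum_nonneg fun v _ => sum_nonneg fun e _ => hf0 e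
  have hparts : ∀ S ∈ P, (1 - ε) * ∑ e ∈ G.edgeFinset with ∀ w ∈ e, w ∈ S, f e ≤ (#S / 2 : ℕ) :=
    fun S _ => one_sub_mul_le_div_two hε (sum_nonneg fun e _ => hf0 e)
      (sum_filter_subset_le_card_div_two hf0 hfm S) (hblossom S)
  calc (1 - ε) * ∑ e ∈ G.edgeFinset, f e
      ≤ (1 - ε) * (∑ v ∈ U, ∑ e ∈ G.edgeFinset with v ∈ e, f e +
          ∑ S ∈ P, ∑ e ∈ G.edgeFinset with ∀ w ∈ e, w ∈ S, f e) :=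
        mul_le_mul_of_nonneg_left (hUP.sum_edgeFinset_le hf0) (by linarith)
    _ ≤ #U + ∑ S ∈ P, ((#S / 2 : ℕ) : ℝ) := by
        rw [mul_add, mul_sum P]
        exact add_le_add (by nlinarith) (sum_le_sum hparts)
    _ ≤ #M := by rw [hcard]; exact_mod_cast hbound

/-- Let `f` be a fractional matching on a graph `G` (values in `[0,1]`
supported on edges with `Σ_{e ∋ v} f_e ≤ 1` at every vertex) satisfying the blossom
inequalities for every vertex set `S` with `|S| ≤ 1/ε`.  Then `G` has a matching `M`
with `|M| ≥ (1 − ε)·|f|`, i.e. `μ(G) ≥ (1 − ε)·|f|`. -/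
theorem stmt_4 {V : Type*} [Fintype V] [DecidableEq V]
    (G : SimpleGraph V) (f : Sym2 V → ℝ) (ε : ℝ) (hε : 0 < ε)
    (hf0 : ∀ e, 0 ≤ f e) (hf1 : ∀ e, f e ≤ 1)
    (hsupp : ∀ e, e ∉ G.edgeSet → f e = 0)
    (hfm : ∀ v : V, ∑ e ∈ G.edgeFinset.filter (fun e => v ∈ e), f e ≤ 1)
    (hblossom : ∀ S : Finset V, (S.card : ℝ) ≤ 1/ε →
      ∑ e ∈ G.edgeFinset.filter (fun e => ∀ v ∈ e, v ∈ S), f e ≤ ((S.card / 2 : ℕ) : ℝ)) :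
    ∃ M : Finset (Sym2 V), M ⊆ G.edgeFinset ∧
      (∀ v : V, (M.filter (fun e => v ∈ e)).card ≤ 1) ∧
      (1 - ε) * (∑ e ∈ G.edgeFinset, f e) ≤ (M.card : ℝ) :=
  stmt_4_general G f ε hε hf0 hfm hblossom
end

section
/- Let y : E → [0,1] be edge values on a graph G such that y_e = 1 for every edge e of a matching M, y_e = 0 for edges adjacent to M, and y_e ≤ ε² for all edges not in or adjacent to M. Then for every vertex set S with |S| = 2k+1 ≤ 1/ε, the blossom inequality holds: Σ_{(u,v)∈E, u,v∈S} y_{(u,v)} ≤ k. -/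
open Finset
open scoped Classical

/-!
Let `a` be the number of matching edges inside `S`. They contribute exactly `a`, and since they
are disjoint, `2a ≤ |S| = 2k + 1`, so `a ≤ k`. Every other edge inside `S` is either adjacent to
`M`, and contributes `0`, or has both endpoints uncovered by `M`. If such a free edge exists, the
`a` matching edges avoid its two endpoints, so `2a + 2 ≤ |S|` and `a ≤ k - 1`; and then all the
non-matching edges inside `S` together contribute at most `ε² |S|² ≤ 1`.
-/

theorem two_mul_card_le_card_of_matching {V : Type*} {A : Finset (Sym2 V)} {S : Finset V}
    (hdiag : ∀ e ∈ A, ¬ e.IsDiag) (hmatch : ∀ v : V, #(A.filter (fun e => v ∈ e)) ≤ 1)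
    (hAS : ∀ e ∈ A, ∀ v ∈ e, v ∈ S) : 2 * #A ≤ #S := by
  have hdeg (e : Sym2 V) (he : e ∈ A) : 2 ≤ #(S.filter (fun v => v ∈ e)) :=
    calc 2 = #e.toFinset := (Sym2.card_toFinset_of_not_isDiag e (hdiag e he)).symm
      _ ≤ #(S.filter (fun v => v ∈ e)) := card_le_card fun v hv =>
          mem_filter.2 ⟨hAS e he v (Sym2.mem_toFinset.1 hv), Sym2.mem_toFinset.1 hv⟩
  have hcount := card_nsmul_le_card_nsmul (R := ℕ) (fun e (v : V) => v ∈ e) hdeg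
    (fun v _ => hmatch v)
  simpa [mul_comm] using hcount

theorem two_mul_card_add_two_le_card_of_matching {V : Type*} {A : Finset (Sym2 V)}
    {S : Finset V} {f : Sym2 V}
    (hdiag : ∀ e ∈ A, ¬ e.IsDiag) (hmatch : ∀ v : V, #(A.filter (fun e => v ∈ e)) ≤ 1)
    (hAS : ∀ e ∈ A, ∀ v ∈ e, v ∈ S) (hf : ¬ f.IsDiag) (hfS : ∀ v ∈ f, v ∈ S)
    (hfA : ∀ e ∈ A, ∀ v ∈ f, v ∉ e) : 2 * #A + 2 ≤ #S := by
  have hf_sub : f.toFinset ⊆ S := fun v hv => hfS v (Sym2.mem_toFinset.1 hv)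
  have hA := two_mul_card_le_card_of_matching (S := S \ f.toFinset) hdiag hmatch
    fun e he v hv => mem_sdiff.2
      ⟨hAS e he v hv, fun hvf => hfA e he v (Sym2.mem_toFinset.1 hvf) hv⟩
  have hf_le := card_le_card hf_sub
  rw [card_sdiff_of_subset hf_sub] at hA
  rw [Sym2.card_toFinset_of_not_isDiag f hf] at hA hf_le
  omega

theorem card_le_sq_of_forall_mem {V : Type*} {F : Finset (Sym2 V)} {S : Finset V}
    (hFS : ∀ e ∈ F, ∀ v ∈ e, v ∈ S) : #F ≤ #S ^ 2 :=
  calc #F ≤ #S.sym2 := card_le_card fun e he => mem_sym2_iff.2 (hFS e he)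
    _ ≤ #(S ×ˢ S) := by rw [sym2_eq_image]; exact card_image_le
    _ = #S ^ 2 := by rw [card_product, sq]

theorem sum_le_one_of_le_sq {V : Type*} {F : Finset (Sym2 V)} {S : Finset V}
    {y : Sym2 V → ℝ} {ε : ℝ} (hε : 0 ≤ ε) (hεS : #S * ε ≤ 1)
    (hFS : ∀ e ∈ F, ∀ v ∈ e, v ∈ S) (hy : ∀ e ∈ F, y e ≤ ε ^ 2) : ∑ e ∈ F, y e ≤ 1 :=
  calc ∑ e ∈ F, y e ≤ #F * ε ^ 2 := by
        simpa only [sum_const, nsmul_eq_mul] using sum_le_sum hy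
    _ ≤ (#S : ℝ) ^ 2 * ε ^ 2 := by gcongr; exact_mod_cast card_le_sq_of_forall_mem hFS
    _ = (#S * ε) ^ 2 := by ring
    _ ≤ 1 := pow_le_one₀ (by positivity) hεS

theorem stmt_18_general {V : Type*} [Fintype V]
    (E M : Finset (Sym2 V)) (y : Sym2 V → ℝ) (ε : ℝ)
    (hε0 : 0 < ε)
    (hsimple : ∀ e ∈ E, ¬ e.IsDiag)
    (hmatch : ∀ v : V, (M.filter (fun e => v ∈ e)).card ≤ 1)
    (hyM : ∀ e ∈ M, y e = 1)
    (hyadj : ∀ e ∈ E, e ∉ M → (∃ m ∈ M, ∃ v : V, v ∈ e ∧ v ∈ m) → y e = 0)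
    (hysmall : ∀ e ∈ E, e ∉ M → ¬ (∃ m ∈ M, ∃ v : V, v ∈ e ∧ v ∈ m) → y e ≤ ε ^ 2) :
    ∀ (S : Finset V) (k : ℕ), S.card = 2 * k + 1 → (S.card : ℝ) ≤ 1 / ε →
      ∑ e ∈ E.filter (fun e => ∀ v ∈ e, v ∈ S), y e ≤ (k : ℝ) := by
  intro S k hcard hεS
  set F := E.filter (fun e => ∀ v ∈ e, v ∈ S)
  set A := F.filter (· ∈ M)
  have hF (e) (he : e ∈ F) : e ∈ E ∧ ∀ v ∈ e, v ∈ S := mem_filter.1 he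
  have hA (e) (he : e ∈ A) : e ∈ F ∧ e ∈ M := mem_filter.1 he
  have hA_diag (e) (he : e ∈ A) : ¬ e.IsDiag := hsimple e (hF e (hA e he).1).1
  have hA_match (v : V) : #(A.filter (fun e => v ∈ e)) ≤ 1 :=
    (card_le_card (filter_subset_filter _ fun e he => (hA e he).2)).trans (hmatch v)
  have hA_S (e) (he : e ∈ A) : ∀ v ∈ e, v ∈ S := (hF e (hA e he).1).2
  rw [← sum_filter_add_sum_filter_not F (· ∈ M),
    sum_congr rfl fun e he => hyM e (hA e he).2, sum_const, nsmul_one]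
  by_cases hfree : ∃ f ∈ F, f ∉ M ∧ ¬ ∃ m ∈ M, ∃ v : V, v ∈ f ∧ v ∈ m
  · obtain ⟨f, hfF, -, hf⟩ := hfree
    have hAk : #A + 1 ≤ k := by
      have := two_mul_card_add_two_le_card_of_matching hA_diag hA_match hA_S
        (hsimple f (hF f hfF).1) (hF f hfF).2
        fun e he v hvf hve => hf ⟨e, (hA e he).2, v, hvf, hve⟩
      omega
    have hrest : ∑ e ∈ F.filter (· ∉ M), y e ≤ 1 := by
      refine sum_le_one_of_le_sq hε0.le ((le_div_iff₀ hε0).1 hεS)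
        (fun e he => (hF e (mem_filter.1 he).1).2) fun e he => ?_
      obtain ⟨heF, heM⟩ := mem_filter.1 he
      by_cases hadj : ∃ m ∈ M, ∃ v : V, v ∈ e ∧ v ∈ m
      · exact (hyadj e (hF e heF).1 heM hadj).trans_le (sq_nonneg ε)
      · exact hysmall e (hF e heF).1 heM hadj
    have hAk' : (#A : ℝ) + 1 ≤ k := by exact_mod_cast hAk
    linarith
  · push Not at hfree
    have hrest : ∑ e ∈ F.filter (· ∉ M), y e = 0 := sum_eq_zero fun e he => by
      obtain ⟨heF, heM⟩ := mem_filter.1 he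
      exact hyadj e (hF e heF).1 heM (hfree e heF heM)
    have hAk : #A ≤ k := by have := two_mul_card_le_card_of_matching hA_diag hA_match hA_S; omega
    rw [hrest, add_zero]
    exact_mod_cast hAk

/-- Let `y : E → [0,1]` with `y_e = 1` on the edges of a matching
`M`, `y_e = 0` on edges adjacent to `M`, and `y_e ≤ ε²` on all other edges.  Then for
every vertex set `S` with `|S| = 2k+1 ≤ 1/ε`, the blossom inequality
`Σ_{e ⊆ S} y_e ≤ k` holds. -/
theorem stmt_18 {V : Type*} [Fintype V]
    (E M : Finset (Sym2 V)) (y : Sym2 V → ℝ) (ε : ℝ)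
    (hε0 : 0 < ε) (hε1 : ε ≤ 1)
    (hsimple : ∀ e ∈ E, ¬ e.IsDiag)
    (hME : M ⊆ E)
    (hmatch : ∀ v : V, (M.filter (fun e => v ∈ e)).card ≤ 1)
    (hy0 : ∀ e, 0 ≤ y e) (hy1 : ∀ e, y e ≤ 1)
    (hyM : ∀ e ∈ M, y e = 1)
    (hyadj : ∀ e ∈ E, e ∉ M → (∃ m ∈ M, ∃ v : V, v ∈ e ∧ v ∈ m) → y e = 0)
    (hysmall : ∀ e ∈ E, e ∉ M → ¬ (∃ m ∈ M, ∃ v : V, v ∈ e ∧ v ∈ m) → y e ≤ ε ^ 2) :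
    ∀ (S : Finset V) (k : ℕ), S.card = 2 * k + 1 → (S.card : ℝ) ≤ 1 / ε →
      ∑ e ∈ E.filter (fun e => ∀ v ∈ e, v ∈ S), y e ≤ (k : ℝ) :=
  stmt_18_general E M y ε hε0 hsimple hmatch hyM hyadj hysmall
end

section
/- Let I be an independent set in the 'conflict graph' of hyperwalks (no two hyperwalks in I share a vertex), each of which is augmenting with respect to a profile P = ((𝒢₀, M₀), ..., (𝒢_α, M_α)). Then applying all hyperwalks of I to P, in any order, yields the same resulting profile P Δ I, and each resulting M'ᵢ is a matching. -/
/-! Hyperwalks sharing no vertex touch disjoint sets of edges, so their applications commute;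
applying the same hyperwalk twice changes nothing, since the second application re-adds and
re-removes the same edges. Hence the result does not depend on the order. For the matching
property look at one vertex `v`: at most one hyperwalk of `I` (possibly repeated) passes
through `v`, and the edges at `v` in the result are those of `P` if none does, and those of
`applyHW P W` if `W` does; both are matchings by hypothesis. -/

open Finset

/-- A finite edge set is a matching if every vertex lies on at most one of its edges. -/
def EdgesAreMatching {V : Type*} [DecidableEq V] (M : Finset (Sym2 V)) : Prop :=
  ∀ v : V, (M.filter (fun e => v ∈ e)).card ≤ 1

/-- The set of vertices of a hyperwalk `W = ((e₁,s₁),...,(e_k,s_k))`. -/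
def HWContains {V : Type*} (W : List (Sym2 V × ℕ)) (v : V) : Prop :=
  ∃ p ∈ W, v ∈ p.1

/-- The underlying edges of a hyperwalk form a walk: consecutive edges share a vertex. -/
def HWIsWalk {V : Type*} (W : List (Sym2 V × ℕ)) : Prop :=
  List.Chain' (fun a b => ∃ v : V, v ∈ a.1 ∧ v ∈ b.1) W

/-- Applying a hyperwalk `W = ((e₁,s₁),...,(e_k,s_k))` to a profile
`P = (M₀, ..., M_α)`: each `Mᵢ` gains the odd-indexed edges `e_j` with `s_j = i` and
loses the even-indexed edges `e_j` with `s_j = i` (positions are 1-based, so 0-based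
position `j` is odd-indexed iff `j % 2 = 0`). -/
def applyHW {V : Type*} [DecidableEq V]
    (P : ℕ → Finset (Sym2 V)) (W : List (Sym2 V × ℕ)) : ℕ → Finset (Sym2 V) :=
  fun i =>
    (P i ∪ (((W.zipIdx.map Prod.swap).filter (fun p => p.1 % 2 = 0 ∧ p.2.2 = i)).map
        (fun p => p.2.1)).toFinset)
      \ (((W.zipIdx.map Prod.swap).filter (fun p => p.1 % 2 = 1 ∧ p.2.2 = i)).map
        (fun p => p.2.1)).toFinset

section Hyperwalk

variable {V : Type*} [DecidableEq V]

def hwEdges (W : List (Sym2 V × ℕ)) (b i : ℕ) : Finset (Sym2 V) :=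
  (((W.zipIdx.map Prod.swap).filter (fun p => p.1 % 2 = b ∧ p.2.2 = i)).map
    (fun p => p.2.1)).toFinset

def HWDisjoint (W W' : List (Sym2 V × ℕ)) : Prop :=
  ∀ v : V, ¬ (HWContains W v ∧ HWContains W' v)

theorem applyHW_apply (P : ℕ → Finset (Sym2 V)) (W : List (Sym2 V × ℕ)) (i : ℕ) :
    applyHW P W i = (P i ∪ hwEdges W 0 i) \ hwEdges W 1 i := rfl

theorem HWContains.of_mem_hwEdges {W : List (Sym2 V × ℕ)} {b i : ℕ} {e : Sym2 V}
    (he : e ∈ hwEdges W b i) {v : V} (hv : v ∈ e) : HWContains W v := by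
  simp only [hwEdges, List.mem_toFinset, List.mem_map, List.mem_filter] at he
  obtain ⟨_, ⟨⟨p, hp, rfl⟩, _⟩, rfl⟩ := he
  exact ⟨p.1, List.fst_mem_of_mem_zipIdx hp, hv⟩

theorem applyHW_comm (P : ℕ → Finset (Sym2 V)) {W W' : List (Sym2 V × ℕ)}
    (h : HWDisjoint W W') : applyHW (applyHW P W) W' = applyHW (applyHW P W') W := by
  funext i
  have hdisj : ∀ b b' e, e ∈ hwEdges W b i → e ∉ hwEdges W' b' i := fun _ _ e he he' =>
    h e.out.1 ⟨.of_mem_hwEdges he e.out_fst_mem, .of_mem_hwEdges he' e.out_fst_mem⟩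
  ext e
  have := hdisj 0 0 e; have := hdisj 0 1 e; have := hdisj 1 0 e; have := hdisj 1 1 e
  simp only [applyHW_apply, mem_sdiff, mem_union]
  tauto

theorem applyHW_applyHW_self (P : ℕ → Finset (Sym2 V)) (W : List (Sym2 V × ℕ)) :
    applyHW (applyHW P W) W = applyHW P W := by
  funext i
  ext e
  simp only [applyHW_apply, mem_sdiff, mem_union]
  tauto

theorem foldl_applyHW_replicate (P : ℕ → Finset (Sym2 V)) (W : List (Sym2 V × ℕ)) {n : ℕ}
    (hn : n ≠ 0) : (List.replicate n W).foldl applyHW P = applyHW P W := by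
  induction n generalizing P with
  | zero => exact absurd rfl hn
  | succ n ih =>
    rcases n with _ | n
    · rfl
    · rw [List.replicate_succ, List.foldl_cons, ih _ n.succ_ne_zero, applyHW_applyHW_self]

theorem foldl_applyHW_perm (P : ℕ → Finset (Sym2 V)) {I I' : List (List (Sym2 V × ℕ))}
    (hdisj : ∀ W ∈ I, ∀ W' ∈ I, W ≠ W' → HWDisjoint W W') (h : I.Perm I') :
    I.foldl applyHW P = I'.foldl applyHW P := by
  refine h.foldl_eq' (fun W hW W' hW' Q => ?_) P
  by_cases hWW' : W = W'
  · rw [hWW']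
  · exact applyHW_comm Q (hdisj W hW W' hW' hWW')

theorem filter_applyHW_of_not_HWContains (P : ℕ → Finset (Sym2 V)) {W : List (Sym2 V × ℕ)}
    {v : V} (hv : ¬ HWContains W v) (i : ℕ) :
    (applyHW P W i).filter (v ∈ ·) = (P i).filter (v ∈ ·) := by
  ext e
  simp only [mem_filter, applyHW_apply, mem_sdiff, mem_union]
  constructor
  · rintro ⟨⟨he | he, -⟩, hve⟩
    · exact ⟨he, hve⟩
    · exact absurd (.of_mem_hwEdges he hve) hv
  · rintro ⟨he, hve⟩
    exact ⟨⟨.inl he, fun he' => hv (.of_mem_hwEdges he' hve)⟩, hve⟩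

theorem filter_foldl_applyHW_of_forall_not_HWContains (P : ℕ → Finset (Sym2 V))
    {I : List (List (Sym2 V × ℕ))} {v : V} (hv : ∀ W ∈ I, ¬ HWContains W v) (i : ℕ) :
    (I.foldl applyHW P i).filter (v ∈ ·) = (P i).filter (v ∈ ·) := by
  induction I generalizing P with
  | nil => rfl
  | cons W I ih =>
    rw [List.foldl_cons, ih _ fun X hX => hv X (List.mem_cons_of_mem _ hX),
      filter_applyHW_of_not_HWContains P (hv W List.mem_cons_self)]

theorem filter_foldl_applyHW_of_HWContains (P : ℕ → Finset (Sym2 V))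
    {I : List (List (Sym2 V × ℕ))} (hdisj : ∀ W ∈ I, ∀ W' ∈ I, W ≠ W' → HWDisjoint W W')
    {W : List (Sym2 V × ℕ)} (hW : W ∈ I) {v : V} (hv : HWContains W v) (i : ℕ) :
    (I.foldl applyHW P i).filter (v ∈ ·) = (applyHW P W i).filter (v ∈ ·) := by
  have hsplit := List.filter_append_perm (· == W) I
  rw [foldl_applyHW_perm P hdisj hsplit.symm, List.foldl_append, List.filter_beq,
    foldl_applyHW_replicate P W (List.count_pos_iff.mpr hW).ne']
  refine filter_foldl_applyHW_of_forall_not_HWContains _ (fun X hX hXv => ?_) i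
  obtain ⟨hXI, hXW⟩ := List.mem_filter.mp hX
  exact hdisj X hXI W hW (by simpa using hXW) v ⟨hXv, hv⟩

end Hyperwalk

theorem stmt_19_general {V : Type*} [DecidableEq V] (α : ℕ)
    (P : ℕ → Finset (Sym2 V)) (hP : ∀ i ≤ α, EdgesAreMatching (P i))
    (I : List (List (Sym2 V × ℕ)))
    (hdisj : ∀ W ∈ I, ∀ W' ∈ I, W ≠ W' →
      ∀ v : V, ¬ (HWContains W v ∧ HWContains W' v))
    (haug : ∀ W ∈ I, ∀ i ≤ α, EdgesAreMatching (applyHW P W i)) :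
    (∀ I' : List (List (Sym2 V × ℕ)), I.Perm I' →
      I.foldl applyHW P = I'.foldl applyHW P) ∧
    (∀ i ≤ α, EdgesAreMatching (I.foldl applyHW P i)) := by
  refine ⟨fun I' h => foldl_applyHW_perm P hdisj h, fun i hi v => ?_⟩
  by_cases hv : ∃ W ∈ I, HWContains W v
  · obtain ⟨W, hW, hWv⟩ := hv
    rw [filter_foldl_applyHW_of_HWContains P hdisj hW hWv]
    exact haug W hW i hi v
  · push Not at hv
    rw [filter_foldl_applyHW_of_forall_not_HWContains P hv]
    exact hP i hi v

/-- Let `I` be an independent set of hyperwalks (no two share a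
vertex), each of which is a walk and is augmenting with respect to a profile
`P = (M₀, ..., M_α)` of matchings, in the sense that applying it to `P` yields
matchings.  Then applying all hyperwalks of `I` to `P` in any order yields the same
resulting profile `P Δ I`, and each resulting `M'ᵢ` is a matching. -/
theorem stmt_19 {V : Type*} [DecidableEq V] (α : ℕ)
    (P : ℕ → Finset (Sym2 V)) (hP : ∀ i ≤ α, EdgesAreMatching (P i))
    (I : List (List (Sym2 V × ℕ)))
    (hlabels : ∀ W ∈ I, ∀ p ∈ W, (p : Sym2 V × ℕ).2 ≤ α)
    (hwalk : ∀ W ∈ I, HWIsWalk W)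
    (hdisj : ∀ W ∈ I, ∀ W' ∈ I, W ≠ W' →
      ∀ v : V, ¬ (HWContains W v ∧ HWContains W' v))
    (haug : ∀ W ∈ I, ∀ i ≤ α, EdgesAreMatching (applyHW P W i)) :
    (∀ I' : List (List (Sym2 V × ℕ)), I.Perm I' →
      I.foldl applyHW P = I'.foldl applyHW P) ∧
    (∀ i ≤ α, EdgesAreMatching (I.foldl applyHW P i)) :=
  stmt_19_general α P hP I hdisj haug
end
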